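/- In the construction described in the context, if v^ℓ ∉ H, then the revenue of the VVCA A_H on v^ℓ is 0. -/

import Mathlib

open Finset MeasureTheory

/-- An `n`-bidder, `m`-item allocation: pairwise disjoint bundles of items. -/
def Alloc (n m : ℕ) : Type :=
  {o : Fin n → Finset (Fin m) // ∀ i j, i ≠ j → o i ∩ o j = ∅}

instance (n m : ℕ) : Inhabited (Alloc n m) :=
  ⟨⟨fun _ => ∅, fun _ _ _ => by simp⟩⟩

instance (n m : ℕ) : Fintype (Alloc n m) :=
  Subtype.fintype _

instance (n m : ℕ) : Nonempty (Alloc n m) := ⟨default⟩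

/-- Maximum of a real-valued function over all allocations. -/
noncomputable def allocMax {n m : ℕ} (f : Alloc n m → ℝ) : ℝ :=
  Finset.univ.sup' Finset.univ_nonempty f

/-- A fixed (canonical) maximizer of a real-valued function over all allocations. -/
noncomputable def chooseMax {n m : ℕ} (f : Alloc n m → ℝ) : Alloc n m :=
  Classical.choose (Finset.exists_max_image Finset.univ f Finset.univ_nonempty)

/-- `os` maximizes the boosted weighted social welfare. -/
def IsMaxAlloc {n m : ℕ} (w : Fin n → ℝ) (lam : Alloc n m → ℝ)
    (v : Fin n → Finset (Fin m) → ℝ) (os : Alloc n m) : Prop :=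
  ∀ o : Alloc n m, (∑ j, w j * v j (o.1 j)) + lam o ≤ (∑ j, w j * v j (os.1 j)) + lam os

/-- Revenue of the AMA with weights `w`, boosts `lam`, on valuations `v`, when the
chosen (welfare-maximizing) allocation is `os`. -/
noncomputable def amaRev {n m : ℕ} (w : Fin n → ℝ) (lam : Alloc n m → ℝ)
    (v : Fin n → Finset (Fin m) → ℝ) (os : Alloc n m) : ℝ :=
  ∑ j, (w j)⁻¹ *
    (allocMax (fun o => (∑ l ∈ Finset.univ.erase j, w l * v l (o.1 l)) + lam o)
      - ((∑ l ∈ Finset.univ.erase j, w l * v l (os.1 l)) + lam os))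

/-- The boosts of the `c`-MBA. -/
def mbaLam {n m : ℕ} (c : ℝ) : Alloc n m → ℝ :=
  fun o => if ∃ i, o.1 i = Finset.univ then c else 0

/-- Revenue of the `c`-MBA (with a fixed tie-breaking rule). -/
noncomputable def mbaRev {n m : ℕ} (v : Fin n → Finset (Fin m) → ℝ) (c : ℝ) : ℝ :=
  amaRev (fun _ => 1) (mbaLam c) v
    (chooseMax fun o => (∑ j, v j (o.1 j)) + mbaLam c o)

/-- Revenue of the MBARP with grand-bundle boost `c` and item reserve prices `r`
(with a fixed tie-breaking rule); the seller participates as bidder `0`. -/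
noncomputable def mbarpRev {n m : ℕ} (v : Fin n → Finset (Fin m) → ℝ) (c : ℝ)
    (r : Fin m → ℝ) : ℝ :=
  let vx : Fin (n + 1) → Finset (Fin m) → ℝ :=
    fun i b => Fin.cases (∑ j ∈ b, r j) (fun i' => v i' b) i
  let g : Fin (n + 1) → Alloc (n + 1) m → ℝ :=
    fun i o => (∑ l ∈ Finset.univ.erase i, vx l (o.1 l)) + mbaLam c o
  let os : Alloc (n + 1) m := chooseMax fun o => (∑ i, vx i (o.1 i)) + mbaLam c o
  ∑ i : Fin n, (allocMax (g i.succ) - g i.succ os)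

/-- Empirical Rademacher complexity of a class `F` on the sample `S`. -/
noncomputable def empRad {X : Type*} (F : Set (X → ℝ)) {N : ℕ} (S : Fin N → X) : ℝ :=
  ((2 : ℝ) ^ N)⁻¹ * ∑ σ : Fin N → Bool,
    ⨆ f ∈ F, (N : ℝ)⁻¹ * ∑ i, (if σ i then (1 : ℝ) else -1) * f (S i)

/-- Rademacher complexity: expected empirical Rademacher complexity over i.i.d. samples. -/
noncomputable def radComp {X : Type*} [MeasurableSpace X] (D : Measure X)
    (F : Set (X → ℝ)) (N : ℕ) : ℝ :=
  ∫ S, empRad F S ∂(Measure.pi fun _ : Fin N => D)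

/-- Pseudo-shattering of the tuple `x` by the class `F`, with witnesses `z`. -/
def PShatters {X : Type*} (F : Set (X → ℝ)) {k : ℕ} (x : Fin k → X) : Prop :=
  ∃ z : Fin k → ℝ, ∀ T : Finset (Fin k), ∃ f ∈ F,
    (∀ i, i ∈ T → f (x i) ≤ z i) ∧ (∀ i, i ∉ T → z i < f (x i))

/-- A valuation is additive if it is determined by its values on singletons. -/
def AdditiveVal {n m : ℕ} (v : Fin n → Finset (Fin m) → ℝ) : Prop :=
  ∀ i b, v i b = ∑ j ∈ b, v i {j}

/-- The two-bidder additive valuation vector associated with the bundle `b`: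
bidder `0` values exactly the items of `bᶜ` at `1` each, and bidder `1` values
exactly the items of `b` at `1` each. -/
def vOf2 {m : ℕ} (b : Finset (Fin m)) : Fin 2 → Finset (Fin m) → ℝ :=
  fun i s => if i = 0 then ((s ∩ bᶜ).card : ℝ) else ((s ∩ b).card : ℝ)

/-- The per-bidder bundle boosts of the VVCA `A_H`: `c_{1,b̃ᶜ} = c_{2,b̃} = 0` for
every `b̃ ∈ H`, and every other boost equals `(1 − γ)/2`. -/
noncomputable def cbOf {m : ℕ} (H : Finset (Finset (Fin m))) (γ : ℝ) :
    Fin 2 → Finset (Fin m) → ℝ :=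
  fun i s =>
    if i = 0 then (if sᶜ ∈ H then 0 else (1 - γ) / 2)
    else (if s ∈ H then 0 else (1 - γ) / 2)

/-!
With `c = (1 - γ)/2 ≥ 0`, every boost is at most `c`, and for `b ∉ H` the allocation
`(bᶜ, b)` gives both bidders their full value and both boosts equal to `c`. It therefore
maximises every value and the total boost at once, so any welfare maximiser does the same.
Then removing a bidder cannot raise the others' boosted welfare, so every payment is zero.
-/

section AMA

variable {n m : ℕ} {w : Fin n → ℝ} {lam : Alloc n m → ℝ}
  {v : Fin n → Finset (Fin m) → ℝ} {os : Alloc n m}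

theorem allocMax_eq_of_forall_le {f : Alloc n m → ℝ} (hf : ∀ o, f o ≤ f os) :
    allocMax f = f os :=
  le_antisymm (Finset.sup'_le _ _ fun o _ => hf o) (Finset.le_sup' f (Finset.mem_univ os))

theorem amaRev_eq_zero_of_forall_le
    (hv : ∀ i (o : Alloc n m), w i * v i (o.1 i) ≤ w i * v i (os.1 i))
    (hlam : ∀ o : Alloc n m, lam o ≤ lam os) : amaRev w lam v os = 0 := by
  refine Finset.sum_eq_zero fun j _ => ?_
  rw [allocMax_eq_of_forall_le fun o => add_le_add (Finset.sum_le_sum fun i _ => hv i o)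
    (hlam o), sub_self, mul_zero]

theorem IsMaxAlloc.forall_le_of_dominant (hos : IsMaxAlloc w lam v os) {e : Alloc n m}
    (hv : ∀ i (o : Alloc n m), w i * v i (o.1 i) ≤ w i * v i (e.1 i))
    (hlam : ∀ o : Alloc n m, lam o ≤ lam e) :
    (∀ i (o : Alloc n m), w i * v i (o.1 i) ≤ w i * v i (os.1 i)) ∧
      ∀ o : Alloc n m, lam o ≤ lam os := by
  have hsum_le : ∑ i, w i * v i (os.1 i) ≤ ∑ i, w i * v i (e.1 i) :=
    Finset.sum_le_sum fun i _ => hv i os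
  have hsum_eq : ∑ i, w i * v i (os.1 i) = ∑ i, w i * v i (e.1 i) :=
    le_antisymm hsum_le (by linarith [hos e, hlam os])
  have hterm := (Finset.sum_eq_sum_iff_of_le fun i _ => hv i os).mp hsum_eq
  refine ⟨fun i o => (hterm i (Finset.mem_univ i)).symm ▸ hv i o, fun o => ?_⟩
  linarith [hos e, hlam o]

end AMA

section Construction

variable {m : ℕ}

def splitAlloc (b : Finset (Fin m)) : Alloc 2 m :=
  ⟨![bᶜ, b], fun i j hij => by
    fin_cases i <;> fin_cases j <;> simp_all [Finset.inter_comm]⟩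

theorem vOf2_le_splitAlloc (b s : Finset (Fin m)) (i : Fin 2) :
    vOf2 b i s ≤ vOf2 b i ((splitAlloc b).1 i) := by
  fin_cases i <;>
    simpa [vOf2, splitAlloc] using card_le_card (inter_subset_right (s₁ := s))

theorem cbOf_le {γ : ℝ} (hγ : γ ≤ 1) (H : Finset (Finset (Fin m))) (i : Fin 2)
    (s : Finset (Fin m)) : cbOf H γ i s ≤ (1 - γ) / 2 := by
  unfold cbOf
  split_ifs <;> linarith

theorem cbOf_splitAlloc {H : Finset (Finset (Fin m))} {b : Finset (Fin m)} (hb : b ∉ H)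
    (γ : ℝ) (i : Fin 2) : cbOf H γ i ((splitAlloc b).1 i) = (1 - γ) / 2 := by
  fin_cases i <;> simp [cbOf, splitAlloc, hb]

end Construction

theorem stmt15_general (m : ℕ) (γ : ℝ) (hγ : γ ∈ Set.Ioo (0 : ℝ) 1)
    (H : Finset (Finset (Fin m)))
    (b : Finset (Fin m)) (hb : b ∉ H)
    (os : Alloc 2 m)
    (hos : IsMaxAlloc (fun _ => 1) (fun o => ∑ i, cbOf H γ i (o.1 i)) (vOf2 b) os) :
    amaRev (fun _ => 1) (fun o => ∑ i, cbOf H γ i (o.1 i)) (vOf2 b) os = 0 := by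
  have hboost (o : Alloc 2 m) :
      ∑ i, cbOf H γ i (o.1 i) ≤ ∑ i, cbOf H γ i ((splitAlloc b).1 i) :=
    Finset.sum_le_sum fun i _ =>
      (cbOf_splitAlloc hb γ i).symm ▸ cbOf_le hγ.2.le H i (o.1 i)
  obtain ⟨hv, hlam⟩ := IsMaxAlloc.forall_le_of_dominant hos
    (fun i o => by simpa only [one_mul] using vOf2_le_splitAlloc b (o.1 i) i) hboost
  exact amaRev_eq_zero_of_forall_le hv hlam

/-- In the VVCA lower-bound construction, if `v^ℓ ∉ H` then the
revenue of `A_H` on `v^ℓ` is `0`. -/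
theorem stmt15 (m : ℕ) (hm : 2 ≤ m) (γ : ℝ) (hγ : γ ∈ Set.Ioo (0 : ℝ) 1)
    (H : Finset (Finset (Fin m))) (hH : ∀ b ∈ H, b ≠ ∅ ∧ b ≠ Finset.univ)
    (b : Finset (Fin m)) (hb0 : b ≠ ∅) (hb1 : b ≠ Finset.univ) (hb : b ∉ H)
    (os : Alloc 2 m)
    (hos : IsMaxAlloc (fun _ => 1) (fun o => ∑ i, cbOf H γ i (o.1 i)) (vOf2 b) os) :
    amaRev (fun _ => 1) (fun o => ∑ i, cbOf H γ i (o.1 i)) (vOf2 b) os = 0 :=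
  stmt15_general m γ hγ H b hb os hos
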